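/- Fix real numbers x, y, z and positive reals σ_x, σ_y, σ_z with σ_y < σ_x, and set A := σ_y²/σ_x². For 0 < ε < 1 define I_ε := ∫₀¹ (1−w)^{1/2}·exp(−(1−w)x²/(2σ_x²(1−w+Aw)) − (1−w)y²/(2σ_y²) − (1−w)z²/(2σ_z²(1−w+εw))) / ((1−w+Aw)^{1/2}·(1−w+εw)^{3/2}) dw. Then ε·I_ε ≤ 2ε^{1/2}/((1−A)^{1/2}·(1 + ε^{1/2})) for all 0 < ε < 1, and consequently ε·I_ε → 0 as ε → 0⁺. -/

import Mathlib

/-!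
Since every term in the exponent is nonpositive, the exponential is at most `1`; and
`(1 - A)(1 - w) ≤ 1 - w + A w`, so `((1 - w)/(1 - w + A w))^{1/2} ≤ (1 - A)^{-1/2}`.
Hence `I_ε ≤ (1 - A)^{-1/2} ∫₀¹ (1 - w + ε w)^{-3/2} dw`, and the last integral equals
`2 / (ε^{1/2} (1 + ε^{1/2}))` in closed form.
-/

open MeasureTheory Filter Topology Set

noncomputable def eszIntegrand (x y z σx σy σz A ε w : ℝ) : ℝ :=
  (1 - w) ^ ((1 : ℝ) / 2) *
    Real.exp (-((1 - w) * x ^ 2 / (2 * σx ^ 2 * (1 - w + A * w)))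
        - (1 - w) * y ^ 2 / (2 * σy ^ 2)
        - (1 - w) * z ^ 2 / (2 * σz ^ 2 * (1 - w + ε * w))) /
    ((1 - w + A * w) ^ ((1 : ℝ) / 2) * (1 - w + ε * w) ^ ((3 : ℝ) / 2))

lemma one_sub_add_mul_pos {a w : ℝ} (ha : 0 ≤ a) (hw : w ∈ Ioo (0 : ℝ) 1) :
    0 < 1 - w + a * w := by
  nlinarith [hw.1, hw.2]

lemma one_sub_add_mul_pos_of_mem_Icc {a w : ℝ} (ha : 0 < a) (hw : w ∈ Icc (0 : ℝ) 1) :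
    0 < 1 - w + a * w := by
  rcases hw.2.lt_or_eq with hw1 | rfl
  · nlinarith [mul_nonneg ha.le hw.1]
  · simpa using ha

lemma integral_Ioo_one_sub_add_mul_rpow_neg_three_halves {ε : ℝ} (hε : 0 < ε) (hε1 : ε ≠ 1) :
    ∫ w in Ioo (0 : ℝ) 1, (1 - w + ε * w) ^ (-(3 : ℝ) / 2) =
      2 / (ε ^ ((1 : ℝ) / 2) * (1 + ε ^ ((1 : ℝ) / 2))) := by
  have hpos : ∀ w ∈ uIcc (0 : ℝ) 1, 0 < 1 - w + ε * w := fun w hw =>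
    one_sub_add_mul_pos_of_mem_Icc hε (by rwa [uIcc_of_le zero_le_one] at hw)
  have hderiv : ∀ w ∈ uIcc (0 : ℝ) 1,
      HasDerivAt (fun w => 2 / (1 - ε) * (1 - w + ε * w) ^ (-(1 : ℝ) / 2))
        ((1 - w + ε * w) ^ (-(3 : ℝ) / 2)) w := by
    intro w hw
    have hlin : HasDerivAt (fun w : ℝ => 1 - w + ε * w) (-1 + ε) w := by
      have h := ((hasDerivAt_id' w).const_sub (1 : ℝ)).add ((hasDerivAt_id' w).const_mul ε)
      rwa [mul_one] at h
    refine ((hlin.rpow_const (p := -(1 : ℝ) / 2) (Or.inl (hpos w hw).ne')).const_mul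
      (2 / (1 - ε))).congr_deriv ?_
    rw [show -(1 : ℝ) / 2 - 1 = -(3 : ℝ) / 2 by norm_num]
    field_simp [sub_ne_zero.mpr hε1.symm]
    ring
  have hint : IntervalIntegrable (fun w : ℝ => (1 - w + ε * w) ^ (-(3 : ℝ) / 2)) volume 0 1 :=
    (ContinuousOn.rpow_const (by fun_prop) fun w hw => Or.inl (hpos w hw).ne').intervalIntegrable
  rw [← integral_Ioc_eq_integral_Ioo, ← intervalIntegral.integral_of_le zero_le_one,
    intervalIntegral.integral_eq_sub_of_hasDerivAt hderiv hint]
  set s := ε ^ ((1 : ℝ) / 2) with hs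
  have hs_pos : 0 < s := Real.rpow_pos_of_pos hε _
  have hs_sq : s ^ 2 = ε := by
    rw [hs, ← Real.rpow_natCast, ← Real.rpow_mul hε.le]
    norm_num
  have hs_ne_one : s ≠ 1 := by
    intro h
    rw [← hs_sq, h, one_pow] at hε1
    exact hε1 rfl
  have hε_rpow : ε ^ (-(1 : ℝ) / 2) = s⁻¹ := by
    rw [neg_div, Real.rpow_neg hε.le]
  simp only [sub_zero, mul_zero, add_zero, sub_self, zero_add, mul_one, Real.one_rpow, hε_rpow]
  rw [← hs_sq]
  have h1s : 1 - s ≠ 0 := sub_ne_zero.mpr hs_ne_one.symm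
  have h1s2 : 1 - s ^ 2 ≠ 0 := by
    rw [show 1 - s ^ 2 = (1 - s) * (1 + s) by ring]
    positivity
  field_simp
  ring

section Bounds

variable {x y z σx σy σz A ε w : ℝ}

lemma exp_neg_gaussian_exponent_le_one (hA : 0 ≤ A) (hε : 0 ≤ ε) (hw : w ∈ Ioo (0 : ℝ) 1) :
    Real.exp (-((1 - w) * x ^ 2 / (2 * σx ^ 2 * (1 - w + A * w)))
        - (1 - w) * y ^ 2 / (2 * σy ^ 2)
        - (1 - w) * z ^ 2 / (2 * σz ^ 2 * (1 - w + ε * w))) ≤ 1 := by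
  have h1w : 0 ≤ 1 - w := by linarith [hw.2]
  have hP := (one_sub_add_mul_pos hA hw).le
  have hQ := (one_sub_add_mul_pos hε hw).le
  rw [Real.exp_le_one_iff]
  have := div_nonneg (mul_nonneg h1w (sq_nonneg x)) (by positivity : 0 ≤ 2 * σx ^ 2 * (1 - w + A * w))
  have := div_nonneg (mul_nonneg h1w (sq_nonneg y)) (by positivity : 0 ≤ 2 * σy ^ 2)
  have := div_nonneg (mul_nonneg h1w (sq_nonneg z)) (by positivity : 0 ≤ 2 * σz ^ 2 * (1 - w + ε * w))
  linarith

lemma rpow_half_one_sub_le (hA : 0 ≤ A) (hA1 : A < 1) (hw : w ∈ Ioo (0 : ℝ) 1) :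
    (1 - w) ^ ((1 : ℝ) / 2) ≤ (1 - A) ^ (-(1 : ℝ) / 2) * (1 - w + A * w) ^ ((1 : ℝ) / 2) := by
  have h1A : 0 < 1 - A := by linarith
  have h1w : 0 ≤ 1 - w := by linarith [hw.2]
  have hc : 0 < (1 - A) ^ ((1 : ℝ) / 2) := Real.rpow_pos_of_pos h1A _
  have key : (1 - A) * (1 - w) ≤ 1 - w + A * w := by nlinarith
  have h := Real.rpow_le_rpow (by positivity) key (by norm_num : (0 : ℝ) ≤ 1 / 2)
  rw [Real.mul_rpow h1A.le h1w] at h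
  rw [neg_div, Real.rpow_neg h1A.le, inv_mul_eq_div, le_div_iff₀ hc, mul_comm]
  exact h

lemma eszIntegrand_nonneg (hA : 0 ≤ A) (hε : 0 ≤ ε) (hw : w ∈ Ioo (0 : ℝ) 1) :
    0 ≤ eszIntegrand x y z σx σy σz A ε w := by
  have h1w : 0 ≤ 1 - w := by linarith [hw.2]
  have hP := (one_sub_add_mul_pos hA hw).le
  have hQ := (one_sub_add_mul_pos hε hw).le
  unfold eszIntegrand
  positivity

lemma eszIntegrand_le (hA : 0 ≤ A) (hA1 : A < 1) (hε : 0 ≤ ε) (hw : w ∈ Ioo (0 : ℝ) 1) :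
    eszIntegrand x y z σx σy σz A ε w ≤
      (1 - A) ^ (-(1 : ℝ) / 2) * (1 - w + ε * w) ^ (-(3 : ℝ) / 2) := by
  have h1w : 0 ≤ 1 - w := by linarith [hw.2]
  have hP := one_sub_add_mul_pos hA hw
  have hQ := one_sub_add_mul_pos hε hw
  have hD : 0 < (1 - w + A * w) ^ ((1 : ℝ) / 2) * (1 - w + ε * w) ^ ((3 : ℝ) / 2) := by
    positivity
  calc eszIntegrand x y z σx σy σz A ε w
      ≤ (1 - w) ^ ((1 : ℝ) / 2) /
          ((1 - w + A * w) ^ ((1 : ℝ) / 2) * (1 - w + ε * w) ^ ((3 : ℝ) / 2)) := by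
        refine div_le_div_of_nonneg_right ?_ hD.le
        exact mul_le_of_le_one_right (Real.rpow_nonneg h1w _)
          (exp_neg_gaussian_exponent_le_one hA hε hw)
    _ ≤ (1 - A) ^ (-(1 : ℝ) / 2) * (1 - w + A * w) ^ ((1 : ℝ) / 2) /
          ((1 - w + A * w) ^ ((1 : ℝ) / 2) * (1 - w + ε * w) ^ ((3 : ℝ) / 2)) :=
        div_le_div_of_nonneg_right (rpow_half_one_sub_le hA hA1 hw) hD.le
    _ = (1 - A) ^ (-(1 : ℝ) / 2) * (1 - w + ε * w) ^ (-(3 : ℝ) / 2) := by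
        have hP' : (1 - w + A * w) ^ ((1 : ℝ) / 2) ≠ 0 := by positivity
        have hQ' : (1 - w + ε * w) ^ ((3 : ℝ) / 2) ≠ 0 := by positivity
        rw [neg_div 2 (3 : ℝ), Real.rpow_neg hQ.le]
        field_simp

lemma mul_integral_eszIntegrand_le (hA : 0 ≤ A) (hA1 : A < 1) (hε : 0 < ε) (hε1 : ε ≠ 1) :
    ε * ∫ w in Ioo (0 : ℝ) 1, eszIntegrand x y z σx σy σz A ε w ≤
      2 * ε ^ ((1 : ℝ) / 2) / ((1 - A) ^ ((1 : ℝ) / 2) * (1 + ε ^ ((1 : ℝ) / 2))) := by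
  have hdom : IntegrableOn (fun w => (1 - A) ^ (-(1 : ℝ) / 2) * (1 - w + ε * w) ^ (-(3 : ℝ) / 2))
      (Ioo (0 : ℝ) 1) := by
    refine (ContinuousOn.integrableOn_Icc ?_).mono_set Ioo_subset_Icc_self
    refine continuousOn_const.mul (ContinuousOn.rpow_const (by fun_prop) fun w hw => ?_)
    exact Or.inl (one_sub_add_mul_pos_of_mem_Icc hε hw).ne'
  have hI : ∫ w in Ioo (0 : ℝ) 1, eszIntegrand x y z σx σy σz A ε w ≤
      (1 - A) ^ (-(1 : ℝ) / 2) * (2 / (ε ^ ((1 : ℝ) / 2) * (1 + ε ^ ((1 : ℝ) / 2)))) := by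
    rw [← integral_Ioo_one_sub_add_mul_rpow_neg_three_halves hε hε1, ← integral_const_mul]
    refine integral_mono_of_nonneg ?_ hdom ?_ <;>
      filter_upwards [ae_restrict_mem measurableSet_Ioo] with w hw
    exacts [eszIntegrand_nonneg hA hε.le hw, eszIntegrand_le hA hA1 hε.le hw]
  refine (mul_le_mul_of_nonneg_left hI hε.le).trans_eq ?_
  have hs_sq : ε ^ ((1 : ℝ) / 2) * ε ^ ((1 : ℝ) / 2) = ε := by
    rw [← Real.rpow_add hε]
    norm_num
  have hs_pos : 0 < ε ^ ((1 : ℝ) / 2) := Real.rpow_pos_of_pos hε _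
  have hc_pos : 0 < (1 - A) ^ ((1 : ℝ) / 2) := Real.rpow_pos_of_pos (by linarith) _
  rw [neg_div, Real.rpow_neg (by linarith)]
  nth_rewrite 1 [← hs_sq]
  field_simp

end Bounds

lemma tendsto_rpow_half_div_nhdsGT_zero {c : ℝ} (hc : c ≠ 0) :
    Tendsto (fun ε : ℝ => 2 * ε ^ ((1 : ℝ) / 2) / (c * (1 + ε ^ ((1 : ℝ) / 2))))
      (𝓝[>] 0) (𝓝 0) := by
  have hcont : ContinuousAt (fun ε : ℝ => 2 * ε ^ ((1 : ℝ) / 2) / (c * (1 + ε ^ ((1 : ℝ) / 2)))) 0 := by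
    refine ContinuousAt.div (by fun_prop (disch := norm_num)) (by fun_prop (disch := norm_num)) ?_
    simpa using hc
  simpa using hcont.tendsto.mono_left nhdsWithin_le_nhds

theorem Esz_vanishes_in_2d_limit_general (x y z σx σy σz : ℝ)
    (hσy : 0 < σy) (hyx : σy < σx)
    (A : ℝ) (hA : A = σy ^ 2 / σx ^ 2)
    (I : ℝ → ℝ)
    (hI : ∀ ε, I ε = ∫ w in Set.Ioo (0 : ℝ) 1,
      (1 - w) ^ ((1 : ℝ) / 2) *
        Real.exp (-((1 - w) * x ^ 2 / (2 * σx ^ 2 * (1 - w + A * w)))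
            - (1 - w) * y ^ 2 / (2 * σy ^ 2)
            - (1 - w) * z ^ 2 / (2 * σz ^ 2 * (1 - w + ε * w))) /
        ((1 - w + A * w) ^ ((1 : ℝ) / 2) * (1 - w + ε * w) ^ ((3 : ℝ) / 2))) :
    (∀ ε : ℝ, 0 < ε → ε < 1 →
      ε * I ε ≤ 2 * ε ^ ((1 : ℝ) / 2) /
        ((1 - A) ^ ((1 : ℝ) / 2) * (1 + ε ^ ((1 : ℝ) / 2)))) ∧
    Tendsto (fun ε => ε * I ε) (𝓝[>] 0) (𝓝 0) := by
  have hA0 : 0 ≤ A := hA ▸ by positivity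
  have hA1 : A < 1 := by
    rw [hA, div_lt_one (by nlinarith)]
    nlinarith
  have hbound : ∀ ε : ℝ, 0 < ε → ε < 1 → ε * I ε ≤ 2 * ε ^ ((1 : ℝ) / 2) /
      ((1 - A) ^ ((1 : ℝ) / 2) * (1 + ε ^ ((1 : ℝ) / 2))) := fun ε hε hε1 =>
    (hI ε).symm ▸ mul_integral_eszIntegrand_le (x := x) (y := y) (z := z) (σz := σz)
      hA0 hA1 hε hε1.ne
  refine ⟨hbound, tendsto_of_tendsto_of_tendsto_of_le_of_le' tendsto_const_nhds
    (tendsto_rpow_half_div_nhdsGT_zero (Real.rpow_pos_of_pos (sub_pos.2 hA1) (1 / 2)).ne') ?_ ?_⟩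
  · filter_upwards [self_mem_nhdsWithin] with ε (hε : 0 < ε)
    rw [hI]
    exact mul_nonneg hε.le (setIntegral_nonneg measurableSet_Ioo fun w hw =>
      eszIntegrand_nonneg (x := x) (y := y) (z := z) (σx := σx) (σy := σy) (σz := σz) hA0 hε.le hw)
  · filter_upwards [Ioo_mem_nhdsGT zero_lt_one] with ε hε
    exact hbound ε hε.1 hε.2

/-- The main conclusion of Section 4: the quantity `ε · I_ε`, to which the
longitudinal field component `E_sz` is proportional, satisfies
`ε·I_ε ≤ 2ε^{1/2}/((1−A)^{1/2}(1+ε^{1/2}))` for `0 < ε < 1`, and hence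
`ε·I_ε → 0` as `ε → 0⁺`. -/
theorem Esz_vanishes_in_2d_limit (x y z σx σy σz : ℝ)
    (hσx : 0 < σx) (hσy : 0 < σy) (hσz : 0 < σz) (hyx : σy < σx)
    (A : ℝ) (hA : A = σy ^ 2 / σx ^ 2)
    (I : ℝ → ℝ)
    (hI : ∀ ε, I ε = ∫ w in Set.Ioo (0 : ℝ) 1,
      (1 - w) ^ ((1 : ℝ) / 2) *
        Real.exp (-((1 - w) * x ^ 2 / (2 * σx ^ 2 * (1 - w + A * w)))
            - (1 - w) * y ^ 2 / (2 * σy ^ 2)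
            - (1 - w) * z ^ 2 / (2 * σz ^ 2 * (1 - w + ε * w))) /
        ((1 - w + A * w) ^ ((1 : ℝ) / 2) * (1 - w + ε * w) ^ ((3 : ℝ) / 2))) :
    (∀ ε : ℝ, 0 < ε → ε < 1 →
      ε * I ε ≤ 2 * ε ^ ((1 : ℝ) / 2) /
        ((1 - A) ^ ((1 : ℝ) / 2) * (1 + ε ^ ((1 : ℝ) / 2)))) ∧
    Tendsto (fun ε => ε * I ε) (𝓝[>] 0) (𝓝 0) :=
  Esz_vanishes_in_2d_limit_general x y z σx σy σz hσy hyx A hA I hI
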